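/- arXiv:1311.7076 — 5 statements merged into one kernel-verified Lean document; each statement's English description precedes it below -/
import Mathlib

section
/- If m ∈ {1,...,n-1} and A is a Borel set contained in an m-dimensional affine subspace of ℝⁿ, then the square of the m-dimensional Hausdorff measure of A equals 1/(n-m) times the sum over i = 1,...,n of the squares of the m-dimensional Hausdorff measures of the orthogonal projections of A onto the coordinate hyperplanes eᵢ^⊥. -/
open MeasureTheory Finset Pointwise
open scoped ENNReal NNReal

noncomputable def ballVolume (k : ℕ) : ℝ :=
  (volume (Metric.ball (0 : EuclideanSpace ℝ (Fin k)) 1)).toReal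

/-- The Steiner polynomial of a compact convex set `K ⊆ ℝⁿ`, recovered by Lagrange
interpolation of `t ↦ vol(K + t Bⁿ)` at `t = 0, 1, …, n`. -/
noncomputable def steinerPoly (n : ℕ) (K : Set (EuclideanSpace ℝ (Fin n))) : Polynomial ℝ :=
  Lagrange.interpolate (Finset.range (n + 1)) (fun j => (j : ℝ))
    (fun j => (volume (K + Metric.closedBall (0 : EuclideanSpace ℝ (Fin n)) (j : ℝ))).toReal)

/-- The `m`-th intrinsic volume `V_m(K)`, via the Steiner formula
`vol(K + t Bⁿ) = ∑_m κ_{n-m} V_m(K) t^{n-m}`. -/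
noncomputable def intrinsicVolume (n m : ℕ) (K : Set (EuclideanSpace ℝ (Fin n))) : ℝ :=
  (steinerPoly n K).coeff (n - m) / ballVolume (n - m)

/-- Orthogonal projection of a subset of `ℝⁿ` onto the coordinate hyperplane `eᵢ^⊥`. -/
noncomputable def coordProj {n : ℕ} (i : Fin n) (A : Set (EuclideanSpace ℝ (Fin n))) :
    Set (EuclideanSpace ℝ (Fin n)) :=
  (fun x => x - x i • EuclideanSpace.single i 1) '' A

open Module InnerProductSpace
open scoped RealInnerProductSpace

/-! Write `A = p + J '' B`, where `J` is the inclusion of the direction of `S`, and let `Pᵢ` be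
the orthogonal projection onto `eᵢ^⊥`. Up to translation, `A|eᵢ^⊥` is the image of `B` under the
linear map `Pᵢ ∘ J`, whose `m`-dimensional area factor `normDet` satisfies
`normDet² = det (J* Pᵢ J) = det (1 - uᵢ uᵢ*) = 1 - ‖uᵢ‖²` with `uᵢ = J* eᵢ` (matrix determinant
lemma). As `∑ ‖uᵢ‖² = tr (J J*) = tr (J* J) = m`, the squared areas of the projections add up to
`(n - m) ℋ^m(A)²`. -/

theorem LinearMap.det_id_add_comp_comm {K M N : Type*} [Field K] [AddCommGroup M] [Module K M]
    [FiniteDimensional K M] [AddCommGroup N] [Module K N] [FiniteDimensional K N]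
    (f : M →ₗ[K] N) (g : N →ₗ[K] M) :
    (LinearMap.id + g ∘ₗ f).det = (LinearMap.id + f ∘ₗ g).det := by
  let b := Module.finBasis K M
  let c := Module.finBasis K N
  rw [← LinearMap.det_toMatrix b, ← LinearMap.det_toMatrix c, map_add, map_add,
    LinearMap.toMatrix_id, LinearMap.toMatrix_id, LinearMap.toMatrix_comp b c b,
    LinearMap.toMatrix_comp c b c, Matrix.det_one_add_mul_comm]

theorem InnerProductSpace.det_id_add_rankOne {𝕜 E : Type*} [RCLike 𝕜] [NormedAddCommGroup E]
    [InnerProductSpace 𝕜 E] [FiniteDimensional 𝕜 E] (x y : E) :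
    (LinearMap.id + (rankOne 𝕜 x y).toLinearMap).det = 1 + inner 𝕜 y x := by
  rw [rankOne_def', ContinuousLinearMap.toLinearMap_comp, LinearMap.det_id_add_comp_comm,
    LinearMap.det_ring]
  simp

theorem hausdorffMeasure_image_add_const {X F : Type*} [NormedAddCommGroup F]
    [MeasurableSpace F] [BorelSpace F] (d : ℝ) (g : X → F) (c : F) (s : Set X) :
    μH[d] ((fun x => g x + c) '' s) = μH[d] (g '' s) := by
  rw [← Set.image_image (· + c) g s]
  exact (IsometryEquiv.addRight c).hausdorffMeasure_image d _

namespace LinearIsometry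

variable {E F : Type*} [NormedAddCommGroup E] [InnerProductSpace ℝ E] [FiniteDimensional ℝ E]
  [NormedAddCommGroup F] [InnerProductSpace ℝ F] [FiniteDimensional ℝ F]

theorem adjoint_comp_self_starProjection_comp (J : E →ₗᵢ[ℝ] F) {e : F} (he : ‖e‖ = 1) :
    ((ℝ ∙ e)ᗮ.starProjection.toLinearMap ∘ₗ J.toLinearMap).adjoint ∘ₗ
        ((ℝ ∙ e)ᗮ.starProjection.toLinearMap ∘ₗ J.toLinearMap) =
      LinearMap.id -
        (rankOne ℝ (J.toLinearMap.adjoint e) (J.toLinearMap.adjoint e)).toLinearMap := by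
  refine LinearMap.ext fun x => ext_inner_right ℝ fun y => ?_
  simp only [LinearMap.comp_apply, LinearMap.adjoint_inner_left, LinearMap.sub_apply,
    LinearMap.id_apply, ContinuousLinearMap.coe_coe, rankOne_apply, inner_sub_left,
    Submodule.starProjection_orthogonal_val, Submodule.starProjection_unit_singleton ℝ he,
    inner_sub_right, real_inner_smul_left, real_inner_smul_right,
    LinearIsometry.coe_toLinearMap, J.inner_map_map, real_inner_self_eq_norm_sq, he]
  rw [real_inner_comm (J x)]
  ring

theorem normDet_sq_starProjection_comp (J : E →ₗᵢ[ℝ] F) {e : F} (he : ‖e‖ = 1) :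
    ((ℝ ∙ e)ᗮ.starProjection.toLinearMap ∘ₗ J.toLinearMap).normDet ^ 2 =
      1 - ‖J.toLinearMap.adjoint e‖ ^ 2 := by
  set u := J.toLinearMap.adjoint e
  have hdet : (LinearMap.id - (rankOne ℝ u u).toLinearMap).det = 1 - ‖u‖ ^ 2 := by
    have := det_id_add_rankOne (𝕜 := ℝ) (-u) u
    rwa [map_neg, neg_apply, ContinuousLinearMap.toLinearMap_neg, ← sub_eq_add_neg,
      inner_neg_right, real_inner_self_eq_norm_sq, ← sub_eq_add_neg] at this
  have := LinearMap.normDet_sq ((ℝ ∙ e)ᗮ.starProjection.toLinearMap ∘ₗ J.toLinearMap)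
  rwa [J.adjoint_comp_self_starProjection_comp he, hdet] at this

theorem sum_norm_sq_adjoint_orthonormalBasis {ι : Type*} [Fintype ι]
    (J : E →ₗᵢ[ℝ] F) (b : OrthonormalBasis ι ℝ F) :
    ∑ i, ‖J.toLinearMap.adjoint (b i)‖ ^ 2 = finrank ℝ E := by
  calc ∑ i, ‖J.toLinearMap.adjoint (b i)‖ ^ 2
      = ∑ i, ⟪b i, (J.toLinearMap ∘ₗ J.toLinearMap.adjoint) (b i)⟫ := by
        simp only [← real_inner_self_eq_norm_sq, LinearMap.adjoint_inner_left,
          LinearMap.comp_apply]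
    _ = LinearMap.trace ℝ E (J.toLinearMap.adjoint ∘ₗ J.toLinearMap) := by
        rw [← LinearMap.trace_eq_sum_inner, LinearMap.trace_comp_comm']
    _ = finrank ℝ E := by rw [J.adjoint_comp_self', LinearMap.trace_id]

theorem sum_sq_hausdorffMeasure_starProjection_comp_image
    [MeasurableSpace E] [BorelSpace E] [MeasurableSpace F] [BorelSpace F]
    {ι : Type*} [Fintype ι] (J : E →ₗᵢ[ℝ] F) (b : OrthonormalBasis ι ℝ F) (s : Set E) :
    ∑ i, μH[finrank ℝ E]
        (((ℝ ∙ b i)ᗮ.starProjection.toLinearMap ∘ₗ J.toLinearMap) '' s) ^ 2 =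
      ((Fintype.card ι - finrank ℝ E : ℕ) : ℝ≥0∞) * μH[finrank ℝ E] s ^ 2 := by
  have hsum :
      ∑ i, ((ℝ ∙ b i)ᗮ.starProjection.toLinearMap ∘ₗ J.toLinearMap).normDet ^ 2 =
        ((Fintype.card ι - finrank ℝ E : ℕ) : ℝ) := by
    have hle : finrank ℝ E ≤ Fintype.card ι := by
      rw [← finrank_eq_card_basis b.toBasis]
      exact LinearMap.finrank_le_finrank_of_injective J.injective
    simp only [J.normDet_sq_starProjection_comp (b.norm_eq_one _), Finset.sum_sub_distrib,
      J.sum_norm_sq_adjoint_orthonormalBasis, Finset.sum_const, Finset.card_univ, nsmul_one,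
      Nat.cast_sub hle]
  simp only [LinearMap.hausdorffMeasure_image, mul_pow, ← Finset.sum_mul,
    ← ENNReal.ofReal_pow (LinearMap.normDet_nonneg _)]
  rw [← ENNReal.ofReal_sum_of_nonneg fun i _ => by positivity, hsum, ENNReal.ofReal_natCast]

end LinearIsometry

theorem coordProj_eq_image_starProjection {n : ℕ} (i : Fin n)
    (A : Set (EuclideanSpace ℝ (Fin n))) :
    coordProj i A = (ℝ ∙ EuclideanSpace.basisFun (Fin n) ℝ i)ᗮ.starProjection '' A := by
  refine Set.image_congr fun x _ => ?_
  rw [Submodule.starProjection_orthogonal_val,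
    Submodule.starProjection_unit_singleton ℝ ((EuclideanSpace.basisFun _ ℝ).norm_eq_one i)]
  simp [EuclideanSpace.inner_single_left]

theorem stmt0_general (n m : ℕ) (hmn : m ≤ n - 1) (hn : 1 ≤ n)
    (A : Set (EuclideanSpace ℝ (Fin n)))
    (S : AffineSubspace ℝ (EuclideanSpace ℝ (Fin n)))
    (hS : Module.finrank ℝ S.direction = m) (hAS : (A : Set _) ⊆ S) :
    (μH[(m : ℝ)] A) ^ 2 =
      (1 / (n - m : ℕ) : ℝ≥0∞) * ∑ i : Fin n, (μH[(m : ℝ)] (coordProj i A)) ^ 2 := by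
  rcases A.eq_empty_or_nonempty with rfl | ⟨p, hp⟩
  · simp [coordProj]
  subst hS
  set J := S.direction.subtypeₗᵢ
  set B : Set S.direction := {v | (v : EuclideanSpace ℝ (Fin n)) + p ∈ A}
  have hAB : A = (fun v => J v + p) '' B := by
    refine (Set.image_preimage_eq_of_subset fun a ha => ?_).symm
    exact ⟨⟨a - p, AffineSubspace.vsub_mem_direction (hAS ha) (hAS hp)⟩, sub_add_cancel a p⟩
  have hA : μH[(finrank ℝ S.direction : ℝ)] A = μH[(finrank ℝ S.direction : ℝ)] B := by
    rw [hAB, hausdorffMeasure_image_add_const, J.isometry.hausdorffMeasure_image (by simp)]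
  have hproj (i : Fin n) : μH[(finrank ℝ S.direction : ℝ)] (coordProj i A) =
      μH[(finrank ℝ S.direction : ℝ)]
        (((ℝ ∙ EuclideanSpace.basisFun (Fin n) ℝ i)ᗮ.starProjection.toLinearMap ∘ₗ
          J.toLinearMap) '' B) := by
    rw [coordProj_eq_image_starProjection, hAB, Set.image_image]
    simp only [map_add]
    exact hausdorffMeasure_image_add_const _ _ _ _
  have hm : n - finrank ℝ S.direction ≠ 0 := by omega
  rw [hA, Fintype.sum_congr _ _ fun i => congrArg (· ^ 2) (hproj i),
    J.sum_sq_hausdorffMeasure_starProjection_comp_image, Fintype.card_fin, one_div, ← mul_assoc,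
    ENNReal.inv_mul_cancel (by exact_mod_cast hm) (ENNReal.natCast_ne_top _), one_mul]

/-- **Generalized Pythagorean theorem for coordinate hyperplanes.**
If `1 ≤ m ≤ n-1` and `A` is a Borel set contained in an `m`-dimensional affine subspace
of `ℝⁿ`, then `ℋ^m(A)² = (1/(n-m)) ∑_{i=1}^n ℋ^m(A|eᵢ^⊥)²`. -/
theorem stmt0 (n m : ℕ) (hm : 1 ≤ m) (hmn : m ≤ n - 1) (hn : 1 ≤ n)
    (A : Set (EuclideanSpace ℝ (Fin n))) (hA : MeasurableSet A)
    (S : AffineSubspace ℝ (EuclideanSpace ℝ (Fin n)))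
    (hS : Module.finrank ℝ S.direction = m) (hAS : (A : Set _) ⊆ S) :
    (μH[(m : ℝ)] A) ^ 2 =
      (1 / (n - m : ℕ) : ℝ≥0∞) * ∑ i : Fin n, (μH[(m : ℝ)] (coordProj i A)) ^ 2 :=
  stmt0_general n m hmn hn A S hS hAS
end

section
/- If m ∈ {1,...,n-1} and A is a Borel set contained in an m-dimensional affine subspace of ℝⁿ, then ℋ^m(A)² equals the sum, over all m-dimensional coordinate subspaces S of ℝⁿ, of ℋ^m(A|S)², where A|S denotes the orthogonal projection of A onto S. -/
open MeasureTheory Finset Pointwise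
open scoped ENNReal NNReal

/-- Orthogonal projection of a subset of `ℝⁿ` onto the coordinate subspace
spanned by the `eᵢ`, `i ∈ s`. -/
noncomputable def coordSubspaceProj {n : ℕ} (s : Finset (Fin n))
    (A : Set (EuclideanSpace ℝ (Fin n))) : Set (EuclideanSpace ℝ (Fin n)) :=
  (fun x => (WithLp.toLp 2 (fun j => if j ∈ s then x j else 0) : EuclideanSpace ℝ (Fin n))) '' A

/-!
Parametrize the affine subspace as `x ↦ f x + p₀`, with `f` linear on an `m`-dimensional inner
product space `U`. A linear map out of `U` scales `ℋ^m` by its norm determinant `√det(fᴴ f)`, so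
`ℋ^m(A)` and `ℋ^m(π_s A)` are the norm determinants of `f` and of `π_s ∘ f` times `ℋ^m` of the
parameter set, where `π_s` projects onto the span of the `e_j`, `j ∈ s`. If `M` is the matrix of
`f` in orthonormal coordinates, these squared norm determinants are `det(Mᴴ M)` and `|det M_s|²`,
with `M_s` the rows of `M` indexed by `s`, and the Cauchy–Binet formula says that
`det(Mᴴ M) = ∑_s |det M_s|²`.
-/

open Matrix Equiv Function

section CauchyBinet

variable {R ι n : Type*} [CommRing R] [Fintype ι] [Fintype n] [DecidableEq n]

theorem Matrix.det_mul_eq_sum_prod_mul_det_submatrix (A : Matrix n ι R) (B : Matrix ι n R) :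
    det (A * B) = ∑ p : n → ι, (∏ i, A i (p i)) * det (B.submatrix p id) := by
  have hrows : A * B = fun i => ∑ k, A i k • B k := by
    ext i j
    simp [mul_apply, Finset.sum_apply]
  rw [hrows]
  change detRowAlternating _ = _
  rw [← AlternatingMap.coe_multilinearMap, MultilinearMap.map_sum]
  simp_rw [AlternatingMap.coe_multilinearMap, AlternatingMap.map_smul_univ, smul_eq_mul]
  rfl

variable {M : Type*} [AddCommMonoid M] {m : ℕ} [LinearOrder ι]

/-- Every injective `p` is `orderEmbOfFin (image p) ∘ σ` for exactly one permutation `σ`. -/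
theorem Fintype.sum_eq_sum_sum_orderEmbOfFin_comp_perm (F : (Fin m → ι) → M)
    (hF : ∀ p, ¬Injective p → F p = 0) :
    ∑ p, F p = ∑ s : {s : Finset ι // s.card = m}, ∑ σ : Perm (Fin m),
      F (s.1.orderEmbOfFin s.2 ∘ σ) := by
  classical
  calc ∑ p, F p = ∑ p with Injective p, F p :=
        (sum_filter_of_ne fun p _ hp => of_not_not (mt (hF p) hp)).symm
    _ = ∑ x : (Σ _ : {s : Finset ι // s.card = m}, Perm (Fin m)),
          F (x.1.1.orderEmbOfFin x.1.2 ∘ x.2) := by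
      symm
      refine Finset.sum_nbij (fun x => x.1.1.orderEmbOfFin x.1.2 ∘ x.2) ?_ ?_ ?_ fun _ _ => rfl
      · intro x _
        simpa using (x.1.1.orderEmbOfFin x.1.2).injective.comp x.2.injective
      · rintro ⟨⟨s, hs⟩, σ⟩ _ ⟨⟨t, ht⟩, τ⟩ _ hst
        have hrange := congrArg Set.range hst
        simp only [EquivLike.range_comp, Finset.range_orderEmbOfFin, Finset.coe_inj] at hrange
        subst hrange
        refine Sigma.ext rfl (heq_of_eq (Equiv.ext fun i => ?_))
        exact (s.orderEmbOfFin hs).injective (congrFun hst i)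
      · intro p hp
        have hinj : Injective p := by simpa using hp
        have hcard : (univ.image p).card = m := by
          rw [card_image_of_injective _ hinj, card_univ, Fintype.card_fin]
        set e := (univ.image p).orderEmbOfFin hcard
        have hrange : Set.range p = Set.range e := by simp [e]
        refine ⟨⟨⟨_, hcard⟩, (Equiv.ofInjective p hinj).trans
          ((Equiv.setCongr hrange).trans (Equiv.ofInjective e e.injective).symm)⟩, by simp, ?_⟩
        funext i
        exact Equiv.apply_ofInjective_symm e.injective ⟨p i, _⟩
    _ = _ := Fintype.sum_sigma _

theorem Matrix.det_mul_eq_sum_det_submatrix_mul_det_submatrix (A : Matrix (Fin m) ι R)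
    (B : Matrix ι (Fin m) R) :
    det (A * B) = ∑ s : {s : Finset ι // s.card = m},
      det (A.submatrix id (s.1.orderEmbOfFin s.2)) *
        det (B.submatrix (s.1.orderEmbOfFin s.2) id) := by
  rw [det_mul_eq_sum_prod_mul_det_submatrix, Fintype.sum_eq_sum_sum_orderEmbOfFin_comp_perm]
  · refine Finset.sum_congr rfl fun s _ => ?_
    set e := s.1.orderEmbOfFin s.2
    rw [← det_transpose, det_apply, Finset.sum_mul]
    refine Finset.sum_congr rfl fun σ _ => ?_
    rw [show B.submatrix (e ∘ σ) id = (B.submatrix e id).submatrix σ id from rfl, det_permute,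
      show ∏ i, A i ((e ∘ σ) i) = ∏ i, (A.submatrix id e)ᵀ (σ i) i from rfl, Units.smul_def,
      zsmul_eq_mul]
    ring
  · intro p hp
    obtain ⟨i, j, hpij, hij⟩ : ∃ i j, p i = p j ∧ i ≠ j := by
      simpa [Injective] using hp
    have hrows : B.submatrix p id i = B.submatrix p id j :=
      funext fun k => by rw [submatrix_apply, submatrix_apply, hpij]
    rw [det_zero_of_row_eq hij hrows, mul_zero]

end CauchyBinet

section Gram

variable {𝕜 ι : Type*} [RCLike 𝕜] [DecidableEq ι]

variable (𝕜) in
def coordSubspaceProjₗ (s : Finset ι) : EuclideanSpace 𝕜 ι →ₗ[𝕜] EuclideanSpace 𝕜 ι where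
  toFun x := WithLp.toLp 2 fun j => if j ∈ s then x j else 0
  map_add' x y := by ext j; by_cases hj : j ∈ s <;> simp [hj]
  map_smul' c x := by ext j; by_cases hj : j ∈ s <;> simp [hj]

@[simp]
theorem coordSubspaceProjₗ_apply (s : Finset ι) (x : EuclideanSpace 𝕜 ι) (j : ι) :
    coordSubspaceProjₗ 𝕜 s x j = if j ∈ s then x j else 0 := rfl

variable [Fintype ι] [LinearOrder ι]

theorem gram_coordSubspaceProjₗ_comp {n : Type*} (v : n → EuclideanSpace 𝕜 ι) {s : Finset ι}
    {k : ℕ} (hs : s.card = k) :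
    letI M := of fun a i => v i (s.orderEmbOfFin hs a)
    gram 𝕜 (coordSubspaceProjₗ 𝕜 s ∘ v) = Mᴴ * M := by
  ext i i'
  simp only [gram_apply, Function.comp_apply, PiLp.inner_apply, coordSubspaceProjₗ_apply,
    RCLike.inner_apply, ite_mul, zero_mul, sum_ite_mem, univ_inter, mul_apply,
    conjTranspose_apply, of_apply, RCLike.star_def]
  conv_lhs => rw [← s.map_orderEmbOfFin_univ hs, Finset.sum_map]
  simp [Finset.orderEmbOfFin_mem, mul_comm]

theorem det_gram_eq_sum_det_gram_coordSubspaceProjₗ_comp {m : ℕ}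
    (v : Fin m → EuclideanSpace 𝕜 ι) :
    (gram 𝕜 v).det = ∑ s ∈ univ.filter (fun s : Finset ι => s.card = m),
      (gram 𝕜 (coordSubspaceProjₗ 𝕜 s ∘ v)).det := by
  rw [gram_eq_conjTranspose_mul (EuclideanSpace.basisFun ι 𝕜),
    det_mul_eq_sum_det_submatrix_mul_det_submatrix,
    Finset.sum_subtype _ (p := fun s : Finset ι => s.card = m) (by simp)]
  refine Finset.sum_congr rfl fun s _ => ?_
  rw [gram_coordSubspaceProjₗ_comp v s.2, det_mul]
  rfl

end Gram

open Module

theorem LinearMap.normDet_sq_eq_sum_normDet_coordSubspaceProjₗ_comp_sq {𝕜 ι U : Type*}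
    [RCLike 𝕜] [Fintype ι] [LinearOrder ι] [NormedAddCommGroup U] [InnerProductSpace 𝕜 U]
    [FiniteDimensional 𝕜 U] (f : U →ₗ[𝕜] EuclideanSpace 𝕜 ι) :
    f.normDet ^ 2 = ∑ s ∈ univ.filter (fun s : Finset ι => s.card = finrank 𝕜 U),
      (coordSubspaceProjₗ 𝕜 s ∘ₗ f).normDet ^ 2 := by
  let b := stdOrthonormalBasis 𝕜 U
  apply RCLike.ofReal_injective (K := 𝕜)
  rw [RCLike.ofReal_sum, f.normDet_sq_eq_det_gram b,
    det_gram_eq_sum_det_gram_coordSubspaceProjₗ_comp]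
  simp_rw [LinearMap.normDet_sq_eq_det_gram _ b]
  rfl

section Hausdorff

variable {ι U V : Type*} [Fintype ι] [LinearOrder ι] [NormedAddCommGroup U]
  [InnerProductSpace ℝ U] [FiniteDimensional ℝ U] [MeasurableSpace U] [BorelSpace U]

theorem LinearMap.hausdorffMeasure_image_add_const [NormedAddCommGroup V] [InnerProductSpace ℝ V]
    [MeasurableSpace V] [BorelSpace V] (f : U →ₗ[ℝ] V) (c : V) (E : Set U) :
    μH[finrank ℝ U] ((fun x => f x + c) '' E) =
      ENNReal.ofReal f.normDet * μH[finrank ℝ U] E := by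
  rw [← f.hausdorffMeasure_image, ← (IsometryEquiv.addRight c).hausdorffMeasure_image _ (f '' E),
    Set.image_image]
  rfl

theorem hausdorffMeasure_sq_eq_sum_hausdorffMeasure_coordSubspaceProjₗ_sq
    (f : U →ₗ[ℝ] EuclideanSpace ℝ ι) (c : EuclideanSpace ℝ ι) (E : Set U) :
    μH[finrank ℝ U] ((fun x => f x + c) '' E) ^ 2 =
      ∑ s ∈ univ.filter (fun s : Finset ι => s.card = finrank ℝ U),
        μH[finrank ℝ U] (coordSubspaceProjₗ ℝ s '' ((fun x => f x + c) '' E)) ^ 2 := by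
  have hproj (s : Finset ι) : coordSubspaceProjₗ ℝ s '' ((fun x => f x + c) '' E) =
      (fun x => (coordSubspaceProjₗ ℝ s ∘ₗ f) x + coordSubspaceProjₗ ℝ s c) '' E := by
    simp [Set.image_image]
  simp_rw [hproj, LinearMap.hausdorffMeasure_image_add_const, mul_pow, ← Finset.sum_mul,
    ← ENNReal.ofReal_pow (LinearMap.normDet_nonneg _),
    ← ENNReal.ofReal_sum_of_nonneg (fun _ _ => sq_nonneg _),
    ← f.normDet_sq_eq_sum_normDet_coordSubspaceProjₗ_comp_sq]

end Hausdorff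

theorem coordSubspaceProj_eq_image {n : ℕ} (s : Finset (Fin n))
    (A : Set (EuclideanSpace ℝ (Fin n))) : coordSubspaceProj s A = coordSubspaceProjₗ ℝ s '' A :=
  rfl

theorem stmt1_general (n m : ℕ)
    (A : Set (EuclideanSpace ℝ (Fin n)))
    (S : AffineSubspace ℝ (EuclideanSpace ℝ (Fin n)))
    (hS : Module.finrank ℝ S.direction = m) (hAS : (A : Set _) ⊆ S) :
    (μH[(m : ℝ)] A) ^ 2 =
      ∑ s ∈ Finset.univ.filter (fun s : Finset (Fin n) => s.card = m),
        (μH[(m : ℝ)] (coordSubspaceProj s A)) ^ 2 := by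
  rcases A.eq_empty_or_nonempty with rfl | ⟨p₀, hp₀⟩
  · simp [coordSubspaceProj_eq_image]
  obtain ⟨E, rfl⟩ : ∃ E : Set S.direction, (fun x => S.direction.subtype x + p₀) '' E = A :=
    ⟨_, Set.image_preimage_eq_of_subset fun a ha =>
      ⟨⟨a - p₀, S.vsub_mem_direction (hAS ha) (hAS hp₀)⟩, by simp⟩⟩
  subst hS
  simp_rw [coordSubspaceProj_eq_image]
  exact hausdorffMeasure_sq_eq_sum_hausdorffMeasure_coordSubspaceProjₗ_sq S.direction.subtype p₀ E

/-- **Generalized Pythagorean theorem (Cauchy–Binet).**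
If `1 ≤ m ≤ n-1` and `A` is a Borel set contained in an `m`-dimensional affine subspace
of `ℝⁿ`, then `ℋ^m(A)²` equals the sum of `ℋ^m(A|S)²` over all `m`-dimensional
coordinate subspaces `S`. -/
theorem stmt1 (n m : ℕ) (hm : 1 ≤ m) (hmn : m ≤ n - 1) (hn : 1 ≤ n)
    (A : Set (EuclideanSpace ℝ (Fin n))) (hA : MeasurableSet A)
    (S : AffineSubspace ℝ (EuclideanSpace ℝ (Fin n)))
    (hS : Module.finrank ℝ S.direction = m) (hAS : (A : Set _) ⊆ S) :
    (μH[(m : ℝ)] A) ^ 2 =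
      ∑ s ∈ Finset.univ.filter (fun s : Finset (Fin n) => s.card = m),
        (μH[(m : ℝ)] (coordSubspaceProj s A)) ^ 2 :=
  stmt1_general n m A S hS hAS
end

section
/- Let f : [a,b] → ℝ be continuous with ∫_a^b f(t) dt = 0, and suppose there exists c ∈ [a,b] with f ≤ 0 on [a,c] and f ≥ 0 on [c,b]. If g : [a,b] → ℝ is nonnegative, monotone increasing, and continuous, then ∫_a^b f(t) g(t) dt ≥ 0. -/
open MeasureTheory Set

/-! Subtracting the constant `g c` does not change `∫ f g`, since `∫ f = 0`; and
`f t * (g t - g c) ≥ 0` pointwise, because `f` and `g - g c` change sign at the same point `c`. -/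

section SignChange

variable {a b c : ℝ} {f g : ℝ → ℝ}

theorem mul_sub_nonneg_of_signChange (hc : c ∈ Icc a b)
    (hfneg : ∀ t ∈ Icc a c, f t ≤ 0) (hfpos : ∀ t ∈ Icc c b, 0 ≤ f t)
    (hgmono : MonotoneOn g (Icc a b)) {t : ℝ} (ht : t ∈ Icc a b) :
    0 ≤ f t * (g t - g c) := by
  rcases le_total t c with htc | hct
  · exact mul_nonneg_of_nonpos_of_nonpos (hfneg t ⟨ht.1, htc⟩)
      (sub_nonpos.2 (hgmono ht hc htc))
  · exact mul_nonneg (hfpos t ⟨hct, ht.2⟩) (sub_nonneg.2 (hgmono hc ht hct))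

theorem integral_mul_nonneg_of_signChange (hc : c ∈ Icc a b)
    (hfi : IntervalIntegrable f volume a b)
    (hfgi : IntervalIntegrable (fun t => f t * g t) volume a b)
    (hf0 : ∫ t in a..b, f t = 0)
    (hfneg : ∀ t ∈ Icc a c, f t ≤ 0) (hfpos : ∀ t ∈ Icc c b, 0 ≤ f t)
    (hgmono : MonotoneOn g (Icc a b)) :
    0 ≤ ∫ t in a..b, f t * g t := by
  have hshift : ∫ t in a..b, f t * (g t - g c) = ∫ t in a..b, f t * g t := by
    simp only [mul_sub]
    rw [intervalIntegral.integral_sub hfgi (hfi.mul_const _),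
      intervalIntegral.integral_mul_const, hf0, zero_mul, sub_zero]
  rw [← hshift]
  exact intervalIntegral.integral_nonneg (hc.1.trans hc.2) fun t ht =>
    mul_sub_nonneg_of_signChange hc hfneg hfpos hgmono ht

end SignChange

theorem stmt10_general (a b c : ℝ) (hc : c ∈ Icc a b) (f g : ℝ → ℝ)
    (hf : ContinuousOn f (Icc a b)) (hf0 : ∫ t in a..b, f t = 0)
    (hfneg : ∀ t ∈ Icc a c, f t ≤ 0) (hfpos : ∀ t ∈ Icc c b, 0 ≤ f t)
    (hg : ContinuousOn g (Icc a b))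
    (hgmono : MonotoneOn g (Icc a b)) :
    0 ≤ ∫ t in a..b, f t * g t := by
  have huIcc : uIcc a b = Icc a b := uIcc_of_le (hc.1.trans hc.2)
  have hfi : IntervalIntegrable f volume a b :=
    (huIcc ▸ hf).intervalIntegrable
  have hfgi : IntervalIntegrable (fun t => f t * g t) volume a b :=
    (huIcc ▸ hf.mul hg).intervalIntegrable
  exact integral_mul_nonneg_of_signChange hc hfi hfgi hf0 hfneg hfpos hgmono

/-- **A Chebyshev-type integral inequality.** If `f : [a,b] → ℝ` is continuous with zero
integral, nonpositive on `[a,c]` and nonnegative on `[c,b]`, and `g` is nonnegative,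
monotone increasing, and continuous on `[a,b]`, then `∫_a^b f g ≥ 0`. -/
theorem stmt10 (a b c : ℝ) (hab : a ≤ b) (hc : c ∈ Icc a b) (f g : ℝ → ℝ)
    (hf : ContinuousOn f (Icc a b)) (hf0 : ∫ t in a..b, f t = 0)
    (hfneg : ∀ t ∈ Icc a c, f t ≤ 0) (hfpos : ∀ t ∈ Icc c b, 0 ≤ f t)
    (hg : ContinuousOn g (Icc a b)) (hgnonneg : ∀ t ∈ Icc a b, 0 ≤ g t)
    (hgmono : MonotoneOn g (Icc a b)) :
    0 ≤ ∫ t in a..b, f t * g t :=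
  stmt10_general a b c hc f g hf hf0 hfneg hfpos hg hgmono
end

section
/- Let a₁,...,aₙ be nonnegative real numbers. There exists a vector x = (x₁,...,xₙ) ∈ ℝⁿ such that, for each i, ∑_{k≠i} x_k² = aᵢ², if and only if aᵢ² ≤ (1/(n-1)) ∑_{k=1}^n a_k² for all i = 1,...,n. -/
/-!
Writing `S = ∑ₖ x_k²`, the `i`-th equation reads `S - xᵢ² = aᵢ²`. Summing over `i` gives
`(n - 1) S = ∑ₖ a_k²`, so for `n ≠ 1` the system has the unique solution
`xᵢ² = (∑ₖ a_k²)/(n - 1) - aᵢ²` in the squares, which is realisable by real `xᵢ` exactly when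
the right-hand sides are nonnegative. For `n = 1` both sides say `a = 0`.
-/

open Finset

theorem Finset.sum_univ_erase_eq_iff {ι K : Type*} [Fintype ι] [DecidableEq ι] [Field K]
    [CharZero K] (hι : Fintype.card ι ≠ 1) (y b : ι → K) :
    (∀ i, ∑ k ∈ univ.erase i, y k = b i) ↔
      ∀ i, y i = (∑ k, b k) / (Fintype.card ι - 1) - b i := by
  have hne : (Fintype.card ι : K) - 1 ≠ 0 := sub_ne_zero.mpr (by exact_mod_cast hι)
  simp_rw [sum_erase_eq_sub (mem_univ _)]
  constructor
  · intro h i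
    have htotal : ((Fintype.card ι : K) - 1) * ∑ k, y k = ∑ k, b k := by
      simp_rw [← h, sum_sub_distrib, sum_const, card_univ, nsmul_eq_mul]
      ring
    rw [← htotal, mul_div_cancel_left₀ _ hne, ← h i]
    ring
  · intro h i
    simp_rw [h, sum_sub_distrib, sum_const, card_univ, nsmul_eq_mul]
    field_simp
    ring

theorem Real.exists_sq_eq_iff {ι : Type*} (c : ι → ℝ) :
    (∃ x : ι → ℝ, ∀ i, x i ^ 2 = c i) ↔ ∀ i, 0 ≤ c i :=
  ⟨fun ⟨x, hx⟩ i => hx i ▸ sq_nonneg (x i),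
    fun h => ⟨fun i => √(c i), fun i => Real.sq_sqrt (h i)⟩⟩

theorem stmt15_general (n : ℕ) (a : Fin n → ℝ) :
    (∃ x : Fin n → ℝ, ∀ i, ∑ k ∈ Finset.univ.erase i, x k ^ 2 = a i ^ 2) ↔
      ∀ i, a i ^ 2 ≤ (1 / ((n : ℝ) - 1)) * ∑ k, a k ^ 2 := by
  rcases eq_or_ne n 1 with rfl | hn
  · simp [Fin.forall_fin_one, le_antisymm_iff, sq_nonneg]
  have hcard : Fintype.card (Fin n) ≠ 1 := by simpa using hn
  simp_rw [sum_univ_erase_eq_iff hcard, Real.exists_sq_eq_iff, sub_nonneg, Fintype.card_fin,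
    one_div_mul_eq_div]

/-- Let `a₁,…,aₙ ≥ 0`. There exists `x ∈ ℝⁿ` with `∑_{k ≠ i} x_k² = aᵢ²` for each `i`
if and only if `aᵢ² ≤ (1/(n-1)) ∑ₖ a_k²` for all `i`. -/
theorem stmt15 (n : ℕ) (a : Fin n → ℝ) (ha : ∀ i, 0 ≤ a i) :
    (∃ x : Fin n → ℝ, ∀ i, ∑ k ∈ Finset.univ.erase i, x k ^ 2 = a i ^ 2) ↔
      ∀ i, a i ^ 2 ≤ (1 / ((n : ℝ) - 1)) * ∑ k, a k ^ 2 :=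
  stmt15_general n a
end

section
/- The mean-width functional satisfies V₁(C³)²/(3 · (2√2)²) < 1/2; that is, the regular coordinate cross-polytope C³ in ℝ³ violates the inequality V₁(K)² ≥ (1/2) ∑_{i=1}^3 V₁(K|eᵢ^⊥)². Concretely: (6√2 arccos(1/3)/π)² < 12. -/
open Real

lemma self_lt_arcsin {x : ℝ} (h₀ : 0 < x) (h₁ : x ≤ 1) : x < arcsin x := by
  have hpos : 0 < arcsin x := arcsin_pos.2 h₀
  calc x = sin (arcsin x) := (sin_arcsin (by linarith) h₁).symm
    _ < arcsin x := sin_lt hpos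

lemma arccos_lt_pi_div_two_sub_self {x : ℝ} (h₀ : 0 < x) (h₁ : x ≤ 1) :
    arccos x < π / 2 - x := by
  rw [arccos_eq_pi_div_two_sub_arcsin]
  linarith [self_lt_arcsin h₀ h₁]

/-- Numerically `arccos (1/3)² ≈ 1.517 < 1.645 ≈ π²/6`; the crude bound `arccos (1/3) < π/2 - 1/3`
together with `3.14 < π < 3.15` already suffices. -/
lemma arccos_one_third_sq_lt : arccos (1 / 3) ^ 2 < π ^ 2 / 6 := by
  have h := arccos_lt_pi_div_two_sub_self (x := 1 / 3) (by norm_num) (by norm_num)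
  have h₀ := arccos_nonneg (1 / 3)
  nlinarith [pi_gt_d2, pi_lt_d2]

/-- The regular coordinate cross-polytope `C³` violates
`V₁(K)² ≥ (1/2) ∑_{i=1}^3 V₁(K|eᵢ^⊥)²`: since `V₁(C³) = (6√2/π) arccos(1/3)` and
`V₁(C³|eᵢ^⊥) = 2√2`, this amounts to `(6√2 arccos(1/3)/π)² < 12`. -/
theorem stmt19 :
    (6 * Real.sqrt 2 * Real.arccos (1 / 3) / Real.pi) ^ 2 < 12 := by
  have hsq : Real.sqrt 2 ^ 2 = 2 := sq_sqrt (by norm_num)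
  rw [div_pow, mul_pow, mul_pow, hsq, div_lt_iff₀ (by positivity)]
  linarith [arccos_one_third_sq_lt]
end
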